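/- For formal Laurent series over a field of characteristic zero, define a pairing tr of a pair (\omega,\hat\omega) as res(\omega + \hat\omega) (coefficient of z^{-1} of the sum), and let \eta and \circ be as in the infinite-dimensional Frobenius manifold construction: \eta(\omega,\hat\omega) = (a'(\omega+\hat\omega)_- - (\omega a'+\hat\omega\hat a')_-, -\hat a'(\omega+\hat\omega)_+ + (\omega a'+\hat\omega\hat a')_+) and the product \circ given by the explicit truncation formula. Then tr(\vec\omega_1 \circ \vec\omega_2) = res(\omega_1 \cdot [first component of \eta(\vec\omega_2)] + \hat\omega_1 \cdot [second component of \eta(\vec\omega_2)]); i.e., the trace of the product equals the natural pairing of \vec\omega_1 with \eta(\vec\omega_2). -/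
import Mathlib


noncomputable section

variable {K : Type*} [Field K]

/-- Truncation of a formal Laurent series to the degrees lying in `s`. -/
def LStrunc (s : Set ℤ) (f : LaurentSeries K) : LaurentSeries K :=
  { coeff := s.indicator f.coeff
    isPWO_support' := f.isPWO_support'.mono (by
      intro p hp
      simp only [Function.mem_support] at hp ⊢
      intro h
      exact hp (by simp [Set.indicator_apply, h])) }

/-- Nonnegative-degree truncation `(f)_{≥0}`. -/
def LSpos (f : LaurentSeries K) : LaurentSeries K := LStrunc {p : ℤ | 0 ≤ p} f

/-- Negative-degree truncation `(f)_{<0}`. -/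
def LSneg (f : LaurentSeries K) : LaurentSeries K := LStrunc {p : ℤ | p < 0} f

/-- Residue: the coefficient of `z⁻¹`. -/
def LSres (f : LaurentSeries K) : K := f.coeff (-1)

/-- The trace of a pair: `tr(ω,ω̂) = res(ω + ω̂)`. -/
def pairTr (v : LaurentSeries K × LaurentSeries K) : K := LSres (v.1 + v.2)

/-- The map η on pairs of Laurent series, with fixed series `a'`, `â'`. -/
def etaMap (a' ah' : LaurentSeries K) (v : LaurentSeries K × LaurentSeries K) :
    LaurentSeries K × LaurentSeries K :=
  (a' * LSneg (v.1 + v.2) - LSneg (v.1 * a' + v.2 * ah'),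
   -(ah' * LSpos (v.1 + v.2)) + LSpos (v.1 * a' + v.2 * ah'))

/-- The product ∘ on pairs of Laurent series, with fixed series `a'`, `â'`. -/
def pairMul (a' ah' : LaurentSeries K) (v w : LaurentSeries K × LaurentSeries K) :
    LaurentSeries K × LaurentSeries K :=
  (w.1 * LSpos (v.1 * a') - v.1 * LSneg (w.1 * a')
     - w.1 * LSneg (v.2 * ah') - v.1 * LSneg (w.2 * ah'),
   w.2 * LSpos (v.2 * ah') - v.2 * LSneg (w.2 * ah')
     + v.2 * LSpos (w.1 * a') + w.2 * LSpos (v.1 * a'))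

lemma trunc_coeff (s : Set ℤ) (f : LaurentSeries K) (p : ℤ) :
    (LStrunc s f).coeff p = s.indicator f.coeff p := rfl

lemma pos_add_neg (f : LaurentSeries K) : LSpos f + LSneg f = f := by
  ext p
  simp only [HahnSeries.coeff_add, LSpos, LSneg, trunc_coeff, Set.indicator_apply,
    Set.mem_setOf_eq]
  rcases le_or_gt 0 p with h | h
  · simp [h, not_lt.mpr h]
  · simp [h, not_le.mpr h]

lemma supp_pos (f : LaurentSeries K) : Function.support (LSpos f).coeff ⊆ {p : ℤ | 0 ≤ p} :=
  Set.support_indicator_subset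

lemma supp_neg (f : LaurentSeries K) : Function.support (LSneg f).coeff ⊆ {p : ℤ | p < 0} :=
  Set.support_indicator_subset

lemma res_add (f g : LaurentSeries K) : LSres (f + g) = LSres f + LSres g := rfl

lemma res_sub (f g : LaurentSeries K) : LSres (f - g) = LSres f - LSres g := by
  simp [LSres, HahnSeries.coeff_sub]

lemma res_neg (f : LaurentSeries K) : LSres (-f) = - LSres f := rfl

lemma trunc_add (s : Set ℤ) (f g : LaurentSeries K) :
    LStrunc s (f + g) = LStrunc s f + LStrunc s g := by
  ext p
  simp only [trunc_coeff, HahnSeries.coeff_add, Set.indicator_apply]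
  by_cases hp : p ∈ s <;> simp [hp]

lemma res_pp (f g : LaurentSeries K) : LSres (LSpos f * LSpos g) = 0 := by
  rw [LSres, HahnSeries.coeff_mul]
  apply Finset.sum_eq_zero
  rintro ⟨i, j⟩ hij
  rw [Finset.mem_addAntidiagonal] at hij
  have hi := supp_pos f hij.1
  have hj := supp_pos g hij.2.1
  simp only [Set.mem_setOf_eq] at hi hj
  exfalso; omega

lemma res_nn (f g : LaurentSeries K) : LSres (LSneg f * LSneg g) = 0 := by
  rw [LSres, HahnSeries.coeff_mul]
  apply Finset.sum_eq_zero
  rintro ⟨i, j⟩ hij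
  rw [Finset.mem_addAntidiagonal] at hij
  have hi := supp_neg f hij.1
  have hj := supp_neg g hij.2.1
  simp only [Set.mem_setOf_eq] at hi hj
  exfalso; omega

lemma LSpos_add (f g : LaurentSeries K) : LSpos (f + g) = LSpos f + LSpos g :=
  trunc_add _ f g

lemma LSneg_add (f g : LaurentSeries K) : LSneg (f + g) = LSneg f + LSneg g :=
  trunc_add _ f g

lemma res_cross (f g : LaurentSeries K) :
    LSres (f * LSpos g) = LSres (LSneg f * g) := by
  calc LSres (f * LSpos g) = LSres ((LSpos f + LSneg f) * LSpos g) := by rw [pos_add_neg]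
    _ = LSres (LSneg f * LSpos g) := by rw [add_mul, res_add, res_pp, zero_add]
    _ = LSres (LSneg f * (LSpos g + LSneg g)) := by
        rw [mul_add, res_add, res_nn, add_zero]
    _ = LSres (LSneg f * g) := by rw [pos_add_neg]

lemma res_split (f g : LaurentSeries K) :
    LSres (f * g) = LSres (f * LSpos g) + LSres (f * LSneg g) := by
  rw [← res_add, ← mul_add, pos_add_neg]

lemma res_expand (f g : LaurentSeries K) :
    LSres (f * g) = LSres (LSneg f * LSpos g) + LSres (LSpos f * LSneg g) := by
  conv_lhs => rw [← pos_add_neg f, ← pos_add_neg g]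
  rw [mul_add, add_mul, add_mul, res_add, res_add, res_add, res_pp, res_nn]
  ring

/-- `tr(ω⃗₁ ∘ ω⃗₂) = ⟨ω⃗₁, η(ω⃗₂)⟩`, i.e. the trace of the product
equals the residue pairing of `ω⃗₁` with `η(ω⃗₂)`. -/
theorem stmt_15 (a' ah' : LaurentSeries K) (v w : LaurentSeries K × LaurentSeries K) :
    pairTr (pairMul a' ah' v w)
      = LSres (v.1 * (etaMap a' ah' w).1 + v.2 * (etaMap a' ah' w).2) := by
  have c1 := res_cross w.1 (v.1 * a')
  have c2 := res_cross w.2 (v.1 * a')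
  have c3 := res_cross (v.2 * ah') w.1
  have c4 := res_cross w.2 (v.2 * ah')
  have c5 := res_cross (v.2 * ah') w.2
  have s1 := res_split (LSneg w.2) (v.2 * ah')
  have s2 := res_split (LSneg (v.2 * ah')) w.2
  have s3 := res_expand w.2 (v.2 * ah')
  have s4 := res_split v.2 (w.2 * ah')
  have n1 := res_nn w.2 (v.2 * ah')
  simp only [pairTr, pairMul, etaMap, LSpos_add, LSneg_add, mul_add, mul_sub, mul_neg,
    res_add, res_sub, res_neg] at *
  ring_nf at c1 c2 c3 c4 c5 s1 s2 s3 s4 n1 ⊢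
  linear_combination c1 + c2 + c3 + c4 + c5 + s1 + s2 - s3 + s4 + 2*n1

end
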